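/- Let B ≥ 2, let C be a B×B real diagonal matrix with positive diagonal entries, let v ∈ ℝ^B be the all-ones vector, let Hₜ be a B×2 real matrix, and let D be the (B−1)×B TDOA differencing matrix whose i-th row has +1 in column i+1, −1 in column 1, and 0 elsewhere. Set H₁ = D · Hₜ and C₁ = D · C · Dᵀ. Then C₁ is invertible and H₁ᵀ · C₁⁻¹ · H₁ = Hₜᵀ · C⁻¹ · Hₜ − (vᵀ · C⁻¹ · v)⁻¹ • (Hₜᵀ · C⁻¹ · v) · (vᵀ · C⁻¹ · Hₜ). (Both the conventional TDOA formulation and the alternative formulation with the extra range parameter r₁ carry the same Fisher information for the position parameter: F₁ = F₂,[x,y].) -/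

import Mathlib

open Matrix

private theorem tdoa_key (n : ℕ) (d : Fin (n+2) → ℝ) (hd : ∀ b, 0 < d b) (P Q : Fin (n+2) → ℝ) :
    ∑ j : Fin (n+1), (∑ i : Fin (n+1), (P i.succ - P 0) *
        ((if i = j then (d i.succ)⁻¹ else 0)
          - (∑ k, (d k)⁻¹)⁻¹ * (d i.succ)⁻¹ * (d j.succ)⁻¹)) * (Q j.succ - Q 0)
    = ∑ k, P k * (d k)⁻¹ * Q k
      - (∑ k, (d k)⁻¹)⁻¹ * (∑ k, P k * (d k)⁻¹) * (∑ k, (d k)⁻¹ * Q k) := by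
  set s : ℝ := ∑ k, (d k)⁻¹ with hs_def
  have hs0 : 0 < s := Finset.sum_pos (fun k _ => inv_pos.2 (hd k)) ⟨0, Finset.mem_univ _⟩
  have hs : s ≠ 0 := hs0.ne'
  set T : ℝ := ∑ i : Fin (n+1), (d i.succ)⁻¹ with hT_def
  set S1 : ℝ := ∑ i : Fin (n+1), P i.succ * (d i.succ)⁻¹ with hS1
  set S2 : ℝ := ∑ i : Fin (n+1), (d i.succ)⁻¹ * Q i.succ with hS2
  set S3 : ℝ := ∑ i : Fin (n+1), P i.succ * (d i.succ)⁻¹ * Q i.succ with hS3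
  set K : ℝ := ∑ i : Fin (n+1), (P i.succ - P 0) * (d i.succ)⁻¹ with hK_def
  have hK : K = S1 - P 0 * T := by
    rw [hK_def, hS1, hT_def, Finset.mul_sum, ← Finset.sum_sub_distrib]
    exact Finset.sum_congr rfl fun i _ => by ring
  have hsT : s = (d 0)⁻¹ + T := by
    rw [hs_def, hT_def, Fin.sum_univ_succ]
  have hinner : ∀ j : Fin (n+1),
      (∑ i : Fin (n+1), (P i.succ - P 0) *
        ((if i = j then (d i.succ)⁻¹ else 0)
          - s⁻¹ * (d i.succ)⁻¹ * (d j.succ)⁻¹))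
      = (P j.succ - P 0 - s⁻¹ * K) * (d j.succ)⁻¹ := by
    intro j
    have : ∀ i : Fin (n+1), (P i.succ - P 0) *
        ((if i = j then (d i.succ)⁻¹ else 0)
          - s⁻¹ * (d i.succ)⁻¹ * (d j.succ)⁻¹)
        = (if i = j then (P i.succ - P 0) * (d i.succ)⁻¹ else 0)
          - s⁻¹ * ((P i.succ - P 0) * (d i.succ)⁻¹) * (d j.succ)⁻¹ := by
      intro i; by_cases h : i = j <;> simp [h] <;> ring
    simp_rw [this]
    rw [Finset.sum_sub_distrib, Finset.sum_ite_eq' Finset.univ j, ← Finset.sum_mul,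
      ← Finset.mul_sum, ← hK_def]
    simp; ring
  simp_rw [hinner]
  have expand : ∀ j : Fin (n+1),
      (P j.succ - P 0 - s⁻¹ * K) * (d j.succ)⁻¹ * (Q j.succ - Q 0)
      = P j.succ * (d j.succ)⁻¹ * Q j.succ - Q 0 * (P j.succ * (d j.succ)⁻¹)
        - (P 0 + s⁻¹ * K) * ((d j.succ)⁻¹ * Q j.succ)
        + ((P 0 + s⁻¹ * K) * Q 0) * (d j.succ)⁻¹ := by
    intro j; ring
  simp_rw [expand]
  rw [Finset.sum_add_distrib, Finset.sum_sub_distrib, Finset.sum_sub_distrib,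
    ← Finset.mul_sum, ← Finset.mul_sum, ← Finset.mul_sum, ← hS3, ← hS1, ← hS2, ← hT_def,
    show (∑ k, P k * (d k)⁻¹ * Q k) = P 0 * (d 0)⁻¹ * Q 0 + S3 from by
      rw [hS3, Fin.sum_univ_succ],
    show (∑ k, P k * (d k)⁻¹) = P 0 * (d 0)⁻¹ + S1 from by
      rw [hS1, Fin.sum_univ_succ],
    show (∑ k, (d k)⁻¹ * Q k) = (d 0)⁻¹ * Q 0 + S2 from by
      rw [hS2, Fin.sum_univ_succ], hK]
  have hc0 : (d 0)⁻¹ = s - T := by rw [hsT]; ring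
  rw [hc0]
  field_simp
  ring

private theorem tdoa_aux (n : ℕ)
    (d : Fin (n+2) → ℝ) (hd : ∀ b, 0 < d b)
    (Ht : Matrix (Fin (n+2)) (Fin 2) ℝ)
    (D : Matrix (Fin (n+1)) (Fin (n+2)) ℝ)
    (hD : ∀ i j, D i j = if (j : ℕ) = (i : ℕ) + 1 then 1
      else if (j : ℕ) = 0 then -1 else 0) :
    IsUnit (D * Matrix.diagonal d * Dᵀ).det ∧
    (D * Ht)ᵀ * (D * Matrix.diagonal d * Dᵀ)⁻¹ * (D * Ht)
      = Htᵀ * (Matrix.diagonal d)⁻¹ * Ht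
        - ((fun _ => (1:ℝ)) ⬝ᵥ (Matrix.diagonal d)⁻¹ *ᵥ (fun _ => (1:ℝ)))⁻¹ •
            Matrix.vecMulVec (Htᵀ *ᵥ ((Matrix.diagonal d)⁻¹ *ᵥ (fun _ => (1:ℝ))))
              (((fun _ => (1:ℝ)) ᵥ* (Matrix.diagonal d)⁻¹) ᵥ* Ht) := by
  have hD' := hD
  have hD0 : ∀ i : Fin (n+1), D i 0 = -1 := by intro i; rw [hD' i 0]; simp
  have hDs : ∀ (i k : Fin (n+1)), D i k.succ = if k = i then 1 else 0 := by
    intro i k; rw [hD' i k.succ]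
    simp [Fin.val_succ, Fin.val_inj]
  have mulHt : ∀ (i : Fin (n+1)) (a : Fin 2), (D * Ht) i a = Ht i.succ a - Ht 0 a := by
    intro i a
    show ∑ k : Fin (n+2), D i k * Ht k a = _
    rw [Fin.sum_univ_succ, hD0]
    simp only [hDs, ite_mul, one_mul, zero_mul]
    rw [Finset.sum_ite_eq' Finset.univ i]
    simp; ring
  have hC1 : ∀ i j : Fin (n+1), (D * Matrix.diagonal d * Dᵀ) i j
      = (if i = j then d i.succ else 0) + d 0 := by
    intro i j
    show ∑ k : Fin (n+2), (D * Matrix.diagonal d) i k * Dᵀ k j = _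
    simp only [Matrix.mul_diagonal, Matrix.transpose_apply]
    rw [Fin.sum_univ_succ, hD0]
    have : ∀ k : Fin (n+1), D i k.succ * d k.succ * D j k.succ
        = if k = i then (if i = j then d i.succ else 0) else 0 := by
      intro k
      rw [hDs, hDs]
      rcases eq_or_ne k i with rfl | h1
      · rcases eq_or_ne k j with rfl | h2
        · simp
        · simp [h2]
      · simp [h1]
    simp only [this]
    rw [Finset.sum_ite_eq' Finset.univ i]
    simp [hD0]; ring
  set s : ℝ := ∑ k, (d k)⁻¹ with hs_def
  have hs0 : 0 < s := Finset.sum_pos (fun k _ => inv_pos.2 (hd k)) ⟨0, Finset.mem_univ _⟩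
  set T : ℝ := ∑ i : Fin (n+1), (d i.succ)⁻¹ with hT_def
  have hsT : s = (d 0)⁻¹ + T := by rw [hs_def, hT_def, Fin.sum_univ_succ]
  set E : Matrix (Fin (n+1)) (Fin (n+1)) ℝ :=
    Matrix.of fun i j => (if i = j then (d i.succ)⁻¹ else 0)
      - s⁻¹ * (d i.succ)⁻¹ * (d j.succ)⁻¹ with hE_def
  have hCE : (D * Matrix.diagonal d * Dᵀ) * E = 1 := by
    ext i l
    show ∑ j : Fin (n+1), (D * Matrix.diagonal d * Dᵀ) i j * E j l = _
    simp only [hC1, hE_def, Matrix.of_apply]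
    have expand : ∀ j : Fin (n+1),
        ((if i = j then d i.succ else 0) + d 0) *
          ((if j = l then (d j.succ)⁻¹ else 0) - s⁻¹ * (d j.succ)⁻¹ * (d l.succ)⁻¹)
        = (if i = j then d i.succ * ((if j = l then (d j.succ)⁻¹ else 0)
              - s⁻¹ * (d j.succ)⁻¹ * (d l.succ)⁻¹) else 0)
          + ((if j = l then d 0 * (d j.succ)⁻¹ else 0)
              - d 0 * s⁻¹ * (d l.succ)⁻¹ * (d j.succ)⁻¹) := by
      intro j
      rcases eq_or_ne i j with rfl | h1
      · rcases eq_or_ne i l with rfl | h2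
        · simp; ring
        · simp [h2]; ring
      · rcases eq_or_ne j l with rfl | h2
        · simp [h1]; ring
        · simp [h1, h2]; ring
    simp only [expand]
    rw [Finset.sum_add_distrib, Finset.sum_ite_eq Finset.univ i, Finset.sum_sub_distrib,
      Finset.sum_ite_eq' Finset.univ l, ← Finset.mul_sum, ← hT_def]
    have hdi : (d i.succ : ℝ) ≠ 0 := (hd _).ne'
    have hdl : (d l.succ : ℝ) ≠ 0 := (hd _).ne'
    have hd0 : (d 0 : ℝ) ≠ 0 := (hd 0).ne'
    have hs : s ≠ 0 := hs0.ne'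
    have hc0 : T = s - (d 0)⁻¹ := by rw [hsT]; ring
    simp only [Finset.mem_univ, if_true, Matrix.one_apply]
    rw [hc0]
    by_cases h : i = l <;> simp [h] <;> field_simp <;> ring
  refine ⟨Matrix.isUnit_det_of_right_inverse hCE, ?_⟩
  have hCinv : (D * Matrix.diagonal d * Dᵀ)⁻¹ = E := Matrix.inv_eq_right_inv hCE
  have hdinv : (Matrix.diagonal d)⁻¹ = Matrix.diagonal (fun k => (d k)⁻¹) := by
    apply Matrix.inv_eq_right_inv
    rw [Matrix.diagonal_mul_diagonal]
    convert Matrix.diagonal_one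
    exact mul_inv_cancel₀ (hd _).ne'
  rw [hCinv, hdinv]
  ext a b
  have lhs_eq : ((D * Ht)ᵀ * E * (D * Ht)) a b
      = ∑ j : Fin (n+1), (∑ i : Fin (n+1), (Ht i.succ a - Ht 0 a) *
          ((if i = j then (d i.succ)⁻¹ else 0) - s⁻¹ * (d i.succ)⁻¹ * (d j.succ)⁻¹))
          * (Ht j.succ b - Ht 0 b) := by
    simp only [Matrix.mul_apply, Matrix.transpose_apply, mulHt, hE_def, Matrix.of_apply]
  rw [lhs_eq, hs_def]
  rw [tdoa_key n d hd (fun k => Ht k a) (fun k => Ht k b)]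
  simp only [Matrix.sub_apply, Matrix.mul_apply, Matrix.transpose_apply,
    Matrix.smul_apply, Matrix.vecMulVec_apply, Matrix.mulVec, Matrix.vecMul,
    dotProduct, Matrix.diagonal_apply, smul_eq_mul]
  simp [Finset.sum_ite_eq, Finset.sum_ite_eq', mul_comm]
  ring

/-- The conventional TDOA formulation and the alternative formulation with the extra
range parameter `r₁` carry the same Fisher information for the position parameter:
with `H₁ = D Hₜ` and `C₁ = D C Dᵀ`, `C₁` is invertible and
`H₁ᵀ C₁⁻¹ H₁ = Hₜᵀ C⁻¹ Hₜ − (vᵀ C⁻¹ v)⁻¹ • (Hₜᵀ C⁻¹ v)(vᵀ C⁻¹ Hₜ)`. -/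
theorem tdoa_fisher_information_equivalence (B : ℕ) (hB : 2 ≤ B)
    (d : Fin B → ℝ) (hd : ∀ b, 0 < d b)
    (C : Matrix (Fin B) (Fin B) ℝ) (hC : C = Matrix.diagonal d)
    (v : Fin B → ℝ) (hv : v = fun _ => 1)
    (Ht : Matrix (Fin B) (Fin 2) ℝ)
    (D : Matrix (Fin (B - 1)) (Fin B) ℝ)
    (hD : ∀ i j, D i j = if (j : ℕ) = (i : ℕ) + 1 then 1
      else if (j : ℕ) = 0 then -1 else 0) :
    IsUnit (D * C * Dᵀ).det ∧
    (D * Ht)ᵀ * (D * C * Dᵀ)⁻¹ * (D * Ht)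
      = Htᵀ * C⁻¹ * Ht
        - (v ⬝ᵥ C⁻¹ *ᵥ v)⁻¹ •
            Matrix.vecMulVec (Htᵀ *ᵥ (C⁻¹ *ᵥ v)) ((v ᵥ* C⁻¹) ᵥ* Ht) := by
  subst hC hv
  obtain ⟨n, rfl⟩ : ∃ n, B = n + 2 := ⟨B - 2, by omega⟩
  exact tdoa_aux n d hd Ht D hD
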